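/- With A, C, S, R as in the CSR construction (λ(A) = 1) and P^(t) := C ⊗ S^t ⊗ R: for every critical node i ∈ N_c and every t ≥ 0, the i-th row of P^(t) equals the i-th row of S^t ⊗ R, and the i-th column of P^(t) equals the i-th column of C ⊗ S^t. -/

import Mathlib

/-!
For `k, l ∈ N_c` the term `C_{ik} (S^t)_{kl} R_{lj}` of `P^(t)_{ij}` is a supremum of weights of
walks `i → k → l → j` whose outer legs have lengths divisible by `γ` and whose middle leg has
length `t` in the critical graph. Prefix such a walk with a closed critical walk through `i` of
weight `1` and of length `t + d` divisible by `γ`, and cut the result after `t` steps at `l'`: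
the remaining walk `l' → j` has length divisible by `γ`, so the term is at most
`(S^t)_{il'} R_{l'j}`. Conversely `C_{ii} ≥ 1`. Columns are symmetric.

Closed critical walks have weight exactly `1`: `λ(A) = 1` bounds every closed walk by `1`
(cut out cycles of length `≤ n`), while every critical edge lies on a cycle of weight `1`.
The same cycle-cutting bounds all entries of the powers of `A`, so the Kleene star is a genuine
supremum.
-/

open scoped NNReal Classical

namespace MaxAlg

/-- Max-times matrix product over `ℝ≥0`. -/
noncomputable def mmul {n : ℕ} (A B : Fin n → Fin n → ℝ≥0) : Fin n → Fin n → ℝ≥0 :=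
  fun i j => Finset.univ.sup fun k => A i k * B k j

/-- Max-algebraic powers of a matrix, with `mpow A 0` the identity. -/
noncomputable def mpow {n : ℕ} (A : Fin n → Fin n → ℝ≥0) : ℕ → (Fin n → Fin n → ℝ≥0)
  | 0 => fun i j => if i = j then 1 else 0
  | (k+1) => mmul A (mpow A k)

/-- Weight of a walk `p` of length `k` (product of the edge weights). -/
noncomputable def pathWeight {n : ℕ} (A : Fin n → Fin n → ℝ≥0) (k : ℕ)
    (p : Fin (k+1) → Fin n) : ℝ≥0 :=
  ∏ t : Fin k, A (p t.castSucc) (p t.succ)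

/-- `p` is a walk in the edge relation `E`. -/
def IsEPath {n : ℕ} (E : Fin n → Fin n → Prop) (k : ℕ) (p : Fin (k+1) → Fin n) : Prop :=
  ∀ t : Fin k, E (p t.castSucc) (p t.succ)

/-- `j` is reachable from `i` in `E` (possibly by the empty path). -/
def Reach {n : ℕ} (E : Fin n → Fin n → Prop) (i j : Fin n) : Prop :=
  ∃ k, ∃ p : Fin (k+1) → Fin n, IsEPath E k p ∧ p 0 = i ∧ p (Fin.last k) = j

/-- Edge relation of the digraph associated with a nonnegative matrix. -/
def edges {n : ℕ} (A : Fin n → Fin n → ℝ≥0) (i j : Fin n) : Prop := A i j ≠ 0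

/-- Lengths of (positive-length) closed walks through `i` in `E`. -/
def cycLen {n : ℕ} (E : Fin n → Fin n → Prop) (i : Fin n) : Set ℕ :=
  {k | 0 < k ∧ ∃ p : Fin (k+1) → Fin n, IsEPath E k p ∧ p 0 = i ∧ p (Fin.last k) = i}

/-- Lengths of all closed walks in `E`. -/
def allCycLen {n : ℕ} (E : Fin n → Fin n → Prop) : Set ℕ :=
  {k | ∃ i, k ∈ cycLen E i}

/-- The gcd of a set of naturals, characterized by the gcd property. -/
noncomputable def setGcd (S : Set ℕ) : ℕ :=
  sInf {d | (∀ s ∈ S, d ∣ s) ∧ ∀ e : ℕ, (∀ s ∈ S, e ∣ s) → e ∣ d}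

/-- Cyclicity of a (completely reducible) digraph: lcm over the nodes of the
gcd of the cycle lengths through that node. -/
noncomputable def graphCyc {n : ℕ} (E : Fin n → Fin n → Prop) : ℕ :=
  Finset.univ.lcm fun i => if (cycLen E i).Nonempty then setGcd (cycLen E i) else 1

/-- The maximum cycle geometric mean `λ(A)`. -/
noncomputable def mcgm {n : ℕ} (A : Fin n → Fin n → ℝ≥0) : ℝ≥0 :=
  sSup {x | ∃ k : ℕ, 0 < k ∧ k ≤ n ∧ ∃ p : Fin (k+1) → Fin n,
    p 0 = p (Fin.last k) ∧ x = pathWeight A k p ^ ((1 : ℝ) / (k : ℝ))}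

/-- The Kleene star `A* = I ⊕ A ⊕ A² ⊕ ⋯` (entrywise supremum of all powers). -/
noncomputable def kleeneStar {n : ℕ} (A : Fin n → Fin n → ℝ≥0) : Fin n → Fin n → ℝ≥0 :=
  fun i j => ⨆ k : ℕ, mpow A k i j

/-- `(i,j)` is a critical edge: it lies on a cycle attaining `λ(A)`. -/
def IsCriticalEdge {n : ℕ} (A : Fin n → Fin n → ℝ≥0) (i j : Fin n) : Prop :=
  ∃ k : ℕ, 0 < k ∧ k ≤ n ∧ ∃ p : Fin (k+1) → Fin n, p 0 = p (Fin.last k) ∧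
    pathWeight A k p ^ ((1 : ℝ) / (k : ℝ)) = mcgm A ∧
    ∃ t : Fin k, p t.castSucc = i ∧ p t.succ = j

/-- A node lying on a critical cycle of `A`. -/
def IsCriticalNode {n : ℕ} (A : Fin n → Fin n → ℝ≥0) (i : Fin n) : Prop :=
  (∃ j, IsCriticalEdge A i j) ∨ (∃ j, IsCriticalEdge A j i)

/-- A completely reducible subgraph of the critical graph of `A`:
every edge is critical, and every edge can be completed to a cycle of the
subgraph (so each weakly connected part is strongly connected). -/
structure CritSubgraph {n : ℕ} (A : Fin n → Fin n → ℝ≥0) where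
  E : Fin n → Fin n → Prop
  critical : ∀ i j, E i j → IsCriticalEdge A i j
  reducible : ∀ i j, E i j → ∃ k, ∃ p : Fin (k+1) → Fin n,
    IsEPath E k p ∧ p 0 = j ∧ p (Fin.last k) = i

/-- Node set `N_c` of the subgraph. -/
def CritSubgraph.Nc {n : ℕ} {A : Fin n → Fin n → ℝ≥0} (G : CritSubgraph A) (i : Fin n) : Prop :=
  (∃ j, G.E i j) ∨ (∃ j, G.E j i)

/-- The matrix `C`: columns of `(A^γ)*` with indices in `N_c`, other columns zero. -/
noncomputable def Cmat {n : ℕ} (A : Fin n → Fin n → ℝ≥0) (G : CritSubgraph A) :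
    Fin n → Fin n → ℝ≥0 :=
  fun i j => if G.Nc j then kleeneStar (mpow A (graphCyc G.E)) i j else 0

/-- The matrix `R`: rows of `(A^γ)*` with indices in `N_c`, other rows zero. -/
noncomputable def Rmat {n : ℕ} (A : Fin n → Fin n → ℝ≥0) (G : CritSubgraph A) :
    Fin n → Fin n → ℝ≥0 :=
  fun i j => if G.Nc i then kleeneStar (mpow A (graphCyc G.E)) i j else 0

/-- The matrix `S`: the restriction of `A` to the edges of the subgraph. -/
noncomputable def Smat {n : ℕ} (A : Fin n → Fin n → ℝ≥0) (G : CritSubgraph A) :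
    Fin n → Fin n → ℝ≥0 :=
  fun i j => if G.E i j then A i j else 0

/-- The CSR product `P^(t) = C ⊗ S^t ⊗ R`. -/
noncomputable def csr {n : ℕ} (A : Fin n → Fin n → ℝ≥0) (G : CritSubgraph A) (t : ℕ) :
    Fin n → Fin n → ℝ≥0 :=
  mmul (mmul (Cmat A G) (mpow (Smat A G) t)) (Rmat A G)

/-- The strongly connected component (as a node set) of `i` in `E`. -/
def scc {n : ℕ} (E : Fin n → Fin n → Prop) (i : Fin n) : Set (Fin n) :=
  {j | Reach E i j ∧ Reach E j i}

/-- The principal submatrix of `A` on the strongly connected component of `i`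
in `D(A)` (other entries zero). -/
noncomputable def compMat {n : ℕ} (A : Fin n → Fin n → ℝ≥0) (i : Fin n) :
    Fin n → Fin n → ℝ≥0 :=
  fun a b => if a ∈ scc (edges A) i ∧ b ∈ scc (edges A) i then A a b else 0

/-- `λ(i)`: the m.c.g.m. of the component of `D(A)` containing `i`. -/
noncomputable def lamNode {n : ℕ} (A : Fin n → Fin n → ℝ≥0) (i : Fin n) : ℝ≥0 :=
  mcgm (compMat A i)

/-- `i` belongs to a nontrivial component of `D(A)` (it lies on a cycle). -/
def Nontrivial' {n : ℕ} (A : Fin n → Fin n → ℝ≥0) (i : Fin n) : Prop :=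
  (cycLen (edges A) i).Nonempty

/-- `γ`: the lcm of the cyclicities of the critical graphs of the nontrivial
components of `D(A)`. -/
noncomputable def gammaU {n : ℕ} (A : Fin n → Fin n → ℝ≥0) : ℕ :=
  Finset.univ.lcm fun i =>
    if Nontrivial' A i then graphCyc (IsCriticalEdge (compMat A i)) else 1

/-- Max-times matrix-vector product. -/
noncomputable def mvec {n : ℕ} (M : Fin n → Fin n → ℝ≥0) (y : Fin n → ℝ≥0) :
    Fin n → ℝ≥0 :=
  fun a => Finset.univ.sup fun k => M a k * y k

/-- `i` strongly accesses `j`: paths of every sufficiently large length exist. -/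
def StrongAccess {n : ℕ} (E : Fin n → Fin n → Prop) (i j : Fin n) : Prop :=
  ∃ T, ∀ t ≥ T, ∃ p : Fin (t+1) → Fin n, IsEPath E t p ∧ p 0 = i ∧ p (Fin.last t) = j


section Powers

variable {n : ℕ}

lemma exists_mmul_eq (X Y : Fin n → Fin n → ℝ≥0) (i j : Fin n) :
    ∃ k, mmul X Y i j = X i k * Y k j := by
  obtain ⟨k, -, hk⟩ := Finset.exists_mem_eq_sup Finset.univ ⟨i, Finset.mem_univ i⟩
    fun k => X i k * Y k j
  exact ⟨k, hk⟩

lemma le_mmul (X Y : Fin n → Fin n → ℝ≥0) (i k j : Fin n) : X i k * Y k j ≤ mmul X Y i j :=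
  Finset.le_sup (f := fun k => X i k * Y k j) (Finset.mem_univ k)

lemma mmul_le {X Y : Fin n → Fin n → ℝ≥0} {i j : Fin n} {c : ℝ≥0}
    (h : ∀ k, X i k * Y k j ≤ c) : mmul X Y i j ≤ c :=
  Finset.sup_le fun k _ => h k

@[simp] lemma mpow_zero_self (M : Fin n → Fin n → ℝ≥0) (i : Fin n) : mpow M 0 i i = 1 := by
  simp [mpow]

lemma mpow_succ_apply (M : Fin n → Fin n → ℝ≥0) (k : ℕ) (i j : Fin n) :
    mpow M (k + 1) i j = mmul M (mpow M k) i j := rfl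

/-- A walk of length `k` is any `p : ℕ → Fin n`, of which only `p 0, …, p k` matter. -/
noncomputable def walkWeight (M : Fin n → Fin n → ℝ≥0) (p : ℕ → Fin n) (k : ℕ) : ℝ≥0 :=
  ∏ s ∈ Finset.range k, M (p s) (p (s + 1))

lemma walkWeight_add (M : Fin n → Fin n → ℝ≥0) (p : ℕ → Fin n) (a b : ℕ) :
    walkWeight M p (a + b) = walkWeight M p a * walkWeight M (fun s => p (a + s)) b := by
  simp only [walkWeight, Finset.prod_range_add, add_assoc]

lemma walkWeight_succ' (M : Fin n → Fin n → ℝ≥0) (p : ℕ → Fin n) (k : ℕ) :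
    walkWeight M p (k + 1) = M (p 0) (p 1) * walkWeight M (fun s => p (s + 1)) k := by
  rw [walkWeight, Finset.prod_range_succ', mul_comm]
  rfl

lemma walkWeight_le_mpow (M : Fin n → Fin n → ℝ≥0) (p : ℕ → Fin n) (k : ℕ) :
    walkWeight M p k ≤ mpow M k (p 0) (p k) := by
  induction k generalizing p with
  | zero => simp [walkWeight]
  | succ k ih =>
    rw [walkWeight_succ']
    exact (mul_le_mul_right (ih _) _).trans (le_mmul _ _ _ (p 1) _)

lemma exists_walkWeight_eq_mpow (M : Fin n → Fin n → ℝ≥0) {k : ℕ} {i j : Fin n}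
    (h : mpow M k i j ≠ 0) :
    ∃ p : ℕ → Fin n, p 0 = i ∧ p k = j ∧ walkWeight M p k = mpow M k i j := by
  induction k generalizing i with
  | zero =>
    have hij : i = j := by by_contra hij; simp [mpow, hij] at h
    exact ⟨fun _ => i, rfl, hij, by simp [walkWeight, hij]⟩
  | succ k ih =>
    obtain ⟨b, hb⟩ := exists_mmul_eq M (mpow M k) i j
    rw [mpow_succ_apply, hb] at h ⊢
    obtain ⟨p, hp0, hpk, hpw⟩ := ih (right_ne_zero_of_mul h)
    refine ⟨fun s => if s = 0 then i else p (s - 1), rfl, by simpa using hpk, ?_⟩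
    simp [walkWeight_succ', hp0, hpw]

lemma exists_mpow_add_le (M : Fin n → Fin n → ℝ≥0) (a b : ℕ) (i j : Fin n) :
    ∃ x, mpow M (a + b) i j ≤ mpow M a i x * mpow M b x j := by
  by_cases h : mpow M (a + b) i j = 0
  · exact ⟨i, by simp [h]⟩
  obtain ⟨p, rfl, rfl, hp⟩ := exists_walkWeight_eq_mpow M h
  refine ⟨p a, ?_⟩
  rw [← hp, walkWeight_add]
  have h := walkWeight_le_mpow M (fun s => p (a + s)) b
  simp only [add_zero] at h
  exact mul_le_mul' (walkWeight_le_mpow M p a) h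

lemma mpow_mul_mpow_le (M : Fin n → Fin n → ℝ≥0) (a b : ℕ) (i x j : Fin n) :
    mpow M a i x * mpow M b x j ≤ mpow M (a + b) i j := by
  induction a generalizing i with
  | zero =>
    by_cases hix : i = x
    · simp [hix]
    · simp [mpow, hix]
  | succ a ih =>
    obtain ⟨c, hc⟩ := exists_mmul_eq M (mpow M a) i x
    rw [mpow_succ_apply, hc, Nat.add_right_comm, mpow_succ_apply, mul_assoc]
    exact (mul_le_mul_right (ih c) _).trans (le_mmul _ _ _ c _)

lemma mpow_add_apply (M : Fin n → Fin n → ℝ≥0) (a b : ℕ) (i j : Fin n) :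
    mpow M (a + b) i j = mmul (mpow M a) (mpow M b) i j := by
  refine le_antisymm ?_ (mmul_le fun x => mpow_mul_mpow_le M a b i x j)
  obtain ⟨x, hx⟩ := exists_mpow_add_le M a b i j
  exact hx.trans (le_mmul _ _ _ x _)

lemma mpow_mpow (M : Fin n → Fin n → ℝ≥0) (g m : ℕ) : mpow (mpow M g) m = mpow M (g * m) := by
  induction m with
  | zero => rfl
  | succ m ih =>
    funext i j
    rw [mpow_succ_apply, ih, ← mpow_add_apply, Nat.mul_succ, Nat.add_comm]

lemma mpow_mono {M N : Fin n → Fin n → ℝ≥0} (h : ∀ x y, M x y ≤ N x y) (k : ℕ) (i j : Fin n) :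
    mpow M k i j ≤ mpow N k i j := by
  induction k generalizing i with
  | zero => rfl
  | succ k ih => exact mmul_le fun c => (mul_le_mul' (h i c) (ih c)).trans (le_mmul _ _ _ c _)

lemma le_mpow_one (M : Fin n → Fin n → ℝ≥0) (x y : Fin n) : M x y ≤ mpow M 1 x y := by
  have h := le_mmul M (mpow M 0) x y y
  rwa [mpow_zero_self, mul_one] at h

lemma mpow_mul_mpow_mul_mpow_mul_mpow_le (M : Fin n → Fin n → ℝ≥0) (a b c d : ℕ)
    (w x y z u : Fin n) :
    mpow M a w x * mpow M b x y * mpow M c y z * mpow M d z u ≤ mpow M (a + b + c + d) w u :=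
  calc mpow M a w x * mpow M b x y * mpow M c y z * mpow M d z u
      ≤ mpow M (a + b) w y * mpow M c y z * mpow M d z u := by
        gcongr
        exact mpow_mul_mpow_le M _ _ _ _ _
    _ ≤ mpow M (a + b + c) w z * mpow M d z u := by
        gcongr
        exact mpow_mul_mpow_le M _ _ _ _ _
    _ ≤ mpow M (a + b + c + d) w u := mpow_mul_mpow_le M _ _ _ _ _

lemma one_le_mpow_mul (M : Fin n → Fin n → ℝ≥0) {L : ℕ} {i : Fin n} (h : 1 ≤ mpow M L i i)
    (r : ℕ) : 1 ≤ mpow M (L * r) i i := by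
  induction r with
  | zero => simp
  | succ r ih =>
    calc (1 : ℝ≥0) ≤ mpow M (L * r) i i * mpow M L i i := one_le_mul_of_one_le_of_one_le ih h
      _ ≤ mpow M (L * (r + 1)) i i := mpow_mul_mpow_le M _ _ _ _ _

lemma walkWeight_one (M : Fin n → Fin n → ℝ≥0) (p : ℕ → Fin n) :
    walkWeight M p 1 = M (p 0) (p 1) := by
  simp [walkWeight]

lemma pathWeight_eq_walkWeight (M : Fin n → Fin n → ℝ≥0) (k : ℕ) (p : ℕ → Fin n) :
    pathWeight M k (fun s => p s) = walkWeight M p k :=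
  Fin.prod_univ_eq_prod_range (fun s => M (p s) (p (s + 1))) k

lemma pathWeight_eq_walkWeight_clamp (M : Fin n → Fin n → ℝ≥0) (k : ℕ)
    (p : Fin (k + 1) → Fin n) : pathWeight M k p = walkWeight M (fun m => p (Fin.clamp m k)) k := by
  rw [← pathWeight_eq_walkWeight]
  congr
  funext s
  congr
  ext
  simp [Fin.clamp, Nat.le_of_lt_succ s.2]

lemma pathWeight_le_mpow (M : Fin n → Fin n → ℝ≥0) (k : ℕ) (p : Fin (k + 1) → Fin n) :
    pathWeight M k p ≤ mpow M k (p 0) (p (Fin.last k)) := by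
  rw [pathWeight_eq_walkWeight_clamp]
  simpa [Fin.clamp, Fin.last] using walkWeight_le_mpow M (fun m => p (Fin.clamp m k)) k

end Powers

section CycleBounds

variable {n : ℕ} {A : Fin n → Fin n → ℝ≥0}

lemma walkWeight_le_one_of_closed (h1 : mcgm A = 1) {p : ℕ → Fin n} {k : ℕ} (hk0 : 0 < k)
    (hkn : k ≤ n) (hp : p k = p 0) : walkWeight A p k ≤ 1 := by
  have hbdd : BddAbove {x | ∃ k : ℕ, 0 < k ∧ k ≤ n ∧ ∃ p : Fin (k+1) → Fin n,
      p 0 = p (Fin.last k) ∧ x = pathWeight A k p ^ ((1 : ℝ) / (k : ℝ))} := by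
    by_contra hb
    rw [mcgm, csSup_of_not_bddAbove hb, csSup_empty] at h1
    exact zero_ne_one h1
  have h := le_csSup hbdd ⟨k, hk0, hkn, fun s => p s, by simp [hp], rfl⟩
  rw [← mcgm, h1] at h
  rwa [pathWeight_eq_walkWeight, one_div, NNReal.rpow_inv_le_iff (by positivity),
    NNReal.one_rpow] at h

lemma exists_lt_le_apply_eq (p : ℕ → Fin n) : ∃ a b, a < b ∧ b ≤ n ∧ p a = p b := by
  obtain ⟨a, b, hab, h⟩ := Fintype.exists_ne_map_eq_of_card_lt (fun s : Fin (n + 1) => p s)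
    (by simp)
  rcases lt_or_gt_of_ne (Fin.val_ne_of_ne hab) with hlt | hlt
  · exact ⟨a, b, hlt, Nat.le_of_lt_succ b.2, h⟩
  · exact ⟨b, a, hlt, Nat.le_of_lt_succ a.2, h.symm⟩

/-- An optimal walk of length `≥ n` repeats a vertex within its first `n` steps; the closed
subwalk in between has weight `≤ 1` because `λ(A) = 1`, so cutting it out loses nothing. -/
lemma exists_lt_mpow_le (h1 : mcgm A = 1) (k : ℕ) (i j : Fin n) :
    ∃ r < n, mpow A k i j ≤ mpow A r i j := by
  induction k using Nat.strong_induction_on with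
  | _ k ih =>
    by_cases hkn : k < n
    · exact ⟨k, hkn, le_rfl⟩
    by_cases h0 : mpow A k i j = 0
    · exact ⟨0, i.pos, by simp [h0]⟩
    obtain ⟨p, rfl, rfl, hp⟩ := exists_walkWeight_eq_mpow A h0
    obtain ⟨a, b, hab, hbn, hpab⟩ := exists_lt_le_apply_eq p
    have hsplit_k : walkWeight A p k
        = walkWeight A p b * walkWeight A (fun s => p (b + s)) (k - b) := by
      rw [← walkWeight_add, Nat.add_sub_cancel' (by omega)]
    have hsplit_b : walkWeight A p b
        = walkWeight A p a * walkWeight A (fun s => p (a + s)) (b - a) := by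
      rw [← walkWeight_add, Nat.add_sub_cancel' hab.le]
    have hcycle : walkWeight A (fun s => p (a + s)) (b - a) ≤ 1 :=
      walkWeight_le_one_of_closed h1 (by omega) (by omega) (by simp [← hpab, hab.le])
    have hrest := walkWeight_le_mpow A (fun s => p (b + s)) (k - b)
    simp only [add_zero, Nat.add_sub_cancel' (show b ≤ k by omega), ← hpab] at hrest
    obtain ⟨r, hr, hle⟩ := ih (a + (k - b)) (by omega)
    refine ⟨r, hr, le_trans ?_ hle⟩
    calc mpow A k (p 0) (p k)
        = walkWeight A p a * walkWeight A (fun s => p (a + s)) (b - a)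
          * walkWeight A (fun s => p (b + s)) (k - b) := by
          rw [← hp, hsplit_k, hsplit_b]
      _ ≤ mpow A a (p 0) (p a) * 1 * mpow A (k - b) (p a) (p k) := by
          gcongr
          exact walkWeight_le_mpow A p a
      _ ≤ mpow A (a + (k - b)) (p 0) (p k) := by
          rw [mul_one]
          exact mpow_mul_mpow_le A a (k - b) _ _ _

lemma mpow_self_le_one (h1 : mcgm A = 1) (k : ℕ) (i : Fin n) : mpow A k i i ≤ 1 := by
  obtain ⟨r, hr, hle⟩ := exists_lt_mpow_le h1 k i i
  refine hle.trans ?_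
  rcases Nat.eq_zero_or_pos r with rfl | hr0
  · simp
  by_cases h0 : mpow A r i i = 0
  · simp [h0]
  obtain ⟨p, hp0, hpr, hp⟩ := exists_walkWeight_eq_mpow A h0
  rw [← hp]
  exact walkWeight_le_one_of_closed h1 hr0 hr.le (hpr.trans hp0.symm)

lemma bddAbove_range_mpow (h1 : mcgm A = 1) (i j : Fin n) :
    BddAbove (Set.range fun k => mpow A k i j) := by
  refine ⟨(Finset.range n).sup fun r => mpow A r i j, ?_⟩
  rintro _ ⟨k, rfl⟩
  obtain ⟨r, hr, hle⟩ := exists_lt_mpow_le h1 k i j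
  exact hle.trans (Finset.le_sup (f := fun r => mpow A r i j) (Finset.mem_range.2 hr))

lemma kleeneStar_mpow_apply (M : Fin n → Fin n → ℝ≥0) (g : ℕ) (x y : Fin n) :
    kleeneStar (mpow M g) x y = ⨆ m, mpow M (g * m) x y := by
  simp only [kleeneStar, mpow_mpow]

lemma mpow_le_kleeneStar (h1 : mcgm A = 1) (g m : ℕ) (x y : Fin n) :
    mpow A (g * m) x y ≤ kleeneStar (mpow A g) x y := by
  rw [kleeneStar_mpow_apply]
  refine le_ciSup (f := fun m => mpow A (g * m) x y) ((bddAbove_range_mpow h1 x y).mono ?_) m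
  rintro _ ⟨m, rfl⟩
  exact ⟨g * m, rfl⟩

lemma one_le_kleeneStar_self (h1 : mcgm A = 1) (g : ℕ) (x : Fin n) :
    1 ≤ kleeneStar (mpow A g) x x := by
  simpa using mpow_le_kleeneStar h1 g 0 x x

end CycleBounds

section CriticalSubgraph

variable {n : ℕ} {A : Fin n → Fin n → ℝ≥0}

lemma exists_one_le_mul_mpow_of_isCriticalEdge (h1 : mcgm A = 1) {u v : Fin n}
    (h : IsCriticalEdge A u v) : ∃ K, 1 ≤ A u v * mpow A K v u := by
  obtain ⟨k, hk0, -, p, hp, hw, t, rfl, rfl⟩ := h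
  have hk : (k : ℝ) ≠ 0 := by positivity
  have hpw : pathWeight A k p = 1 := by
    rw [← NNReal.rpow_inv_rpow hk (pathWeight A k p), ← one_div, hw, h1, NNReal.one_rpow]
  rw [pathWeight_eq_walkWeight_clamp] at hpw
  set q : ℕ → Fin n := fun m => p (Fin.clamp m k)
  have hqk : q k = q 0 := by simpa [q, Fin.clamp, Fin.last] using hp.symm
  have hqt : q t = p t.castSucc := by simp [q, Fin.clamp, t.2.le]; rfl
  have hqt' : q (t + 1) = p t.succ := by simp [q, Fin.clamp, Nat.succ_le_of_lt t.2]; rfl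
  have hsplit : k = t + (1 + (k - t - 1)) := by omega
  rw [hsplit, walkWeight_add, walkWeight_add, walkWeight_one] at hpw
  refine ⟨k - t - 1 + t, ?_⟩
  have hback := walkWeight_le_mpow A (fun s => q (t + 1 + s)) (k - t - 1)
  simp only [add_zero, show t + 1 + (k - t - 1) = k by omega, hqk] at hback
  have hfront := walkWeight_le_mpow A q t
  calc (1 : ℝ≥0)
      = A (q t) (q (t + 1)) * (walkWeight A (fun s => q (t + 1 + s)) (k - t - 1)
        * walkWeight A q t) := by
        rw [← hpw]
        simp only [add_zero, add_assoc]
        ring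
    _ ≤ A (q t) (q (t + 1)) * (mpow A (k - t - 1) (q (t + 1)) (q 0) * mpow A t (q 0) (q t)) :=
      mul_le_mul_right (mul_le_mul' hback hfront) _
    _ ≤ A (p t.castSucc) (p t.succ) * mpow A (k - t - 1 + t) (p t.succ) (p t.castSucc) := by
      rw [← hqt, ← hqt']
      gcongr
      exact mpow_mul_mpow_le A _ _ _ _ _

variable (G : CritSubgraph A)

lemma Smat_le (x y : Fin n) : Smat A G x y ≤ A x y := by
  unfold Smat
  split_ifs <;> simp

lemma CritSubgraph.E_of_Smat_ne_zero {x y : Fin n} (h : Smat A G x y ≠ 0) : G.E x y := by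
  by_contra hE
  exact h (if_neg hE)

lemma CritSubgraph.Smat_ne_zero_of_E (h1 : mcgm A = 1) {x y : Fin n} (h : G.E x y) :
    Smat A G x y ≠ 0 := by
  obtain ⟨K, hK⟩ := exists_one_le_mul_mpow_of_isCriticalEdge h1 (G.critical x y h)
  rw [Smat, if_pos h]
  rintro h0
  simp [h0] at hK

lemma exists_one_le_mpow_Smat_mul_mpow (h1 : mcgm A = 1) {L : ℕ} {x y : Fin n}
    (h : mpow (Smat A G) L x y ≠ 0) : ∃ K, 1 ≤ mpow (Smat A G) L x y * mpow A K y x := by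
  induction L generalizing x with
  | zero =>
    have hxy : x = y := by by_contra hxy; simp [mpow, hxy] at h
    exact ⟨0, by simp [hxy]⟩
  | succ L ih =>
    obtain ⟨b, hb⟩ := exists_mmul_eq (Smat A G) (mpow (Smat A G) L) x y
    rw [mpow_succ_apply, hb] at h ⊢
    have hE := G.E_of_Smat_ne_zero (left_ne_zero_of_mul h)
    obtain ⟨K₁, hK₁⟩ := exists_one_le_mul_mpow_of_isCriticalEdge h1 (G.critical x b hE)
    obtain ⟨K₂, hK₂⟩ := ih (right_ne_zero_of_mul h)
    refine ⟨K₂ + K₁, ?_⟩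
    calc (1 : ℝ≥0)
        ≤ (A x b * mpow A K₁ b x) * (mpow (Smat A G) L b y * mpow A K₂ y b) :=
          one_le_mul_of_one_le_of_one_le hK₁ hK₂
      _ = Smat A G x b * mpow (Smat A G) L b y * (mpow A K₂ y b * mpow A K₁ b x) := by
          rw [Smat, if_pos hE]
          ring
      _ ≤ Smat A G x b * mpow (Smat A G) L b y * mpow A (K₂ + K₁) y x := by
          gcongr
          exact mpow_mul_mpow_le A _ _ _ _ _

lemma CritSubgraph.Nc_of_mpow_Smat_ne_zero {k : ℕ} (hk : 0 < k) {x y : Fin n}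
    (h : mpow (Smat A G) k x y ≠ 0) : G.Nc x ∧ G.Nc y := by
  obtain ⟨p, rfl, rfl, hp⟩ := exists_walkWeight_eq_mpow (Smat A G) h
  rw [← hp, walkWeight, Finset.prod_ne_zero_iff] at h
  have hfirst := G.E_of_Smat_ne_zero (h 0 (Finset.mem_range.2 hk))
  have hlast := G.E_of_Smat_ne_zero (h (k - 1) (Finset.mem_range.2 (by omega)))
  rw [Nat.sub_add_cancel hk] at hlast
  exact ⟨Or.inl ⟨_, hfirst⟩, Or.inr ⟨_, hlast⟩⟩

lemma mpow_Smat_ne_zero_of_isEPath (h1 : mcgm A = 1) {k : ℕ} {p : Fin (k + 1) → Fin n}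
    (hp : IsEPath G.E k p) : mpow (Smat A G) k (p 0) (p (Fin.last k)) ≠ 0 := by
  refine ne_of_gt (lt_of_lt_of_le ?_ (pathWeight_le_mpow _ k p))
  exact pos_iff_ne_zero.2 (Finset.prod_ne_zero_iff.2 fun t _ => G.Smat_ne_zero_of_E h1 (hp t))

lemma exists_mpow_Smat_self_ne_zero (h1 : mcgm A = 1) {i : Fin n} (hi : G.Nc i) :
    ∃ L, 0 < L ∧ mpow (Smat A G) L i i ≠ 0 := by
  rcases hi with ⟨j, hij⟩ | ⟨j, hji⟩
  · obtain ⟨k, p, hp, rfl, hpk⟩ := G.reducible i j hij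
    refine ⟨1 + k, by omega, ne_of_gt (lt_of_lt_of_le ?_ (mpow_mul_mpow_le _ 1 k i (p 0) i))⟩
    refine mul_pos (lt_of_lt_of_le ?_ (le_mpow_one _ _ _)) ?_
    · exact pos_iff_ne_zero.2 (G.Smat_ne_zero_of_E h1 hij)
    · exact pos_iff_ne_zero.2 (hpk ▸ mpow_Smat_ne_zero_of_isEPath G h1 hp)
  · obtain ⟨k, p, hp, hp0, hpk⟩ := G.reducible j i hji
    refine ⟨k + 1, by omega, ne_of_gt (lt_of_lt_of_le ?_ (mpow_mul_mpow_le _ k 1 i j i))⟩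
    refine mul_pos ?_ (lt_of_lt_of_le ?_ (le_mpow_one _ _ _))
    · exact pos_iff_ne_zero.2 (hp0 ▸ hpk ▸ mpow_Smat_ne_zero_of_isEPath G h1 hp)
    · exact pos_iff_ne_zero.2 (G.Smat_ne_zero_of_E h1 hji)

lemma exists_one_le_mpow_Smat_self (h1 : mcgm A = 1) {i : Fin n} (hi : G.Nc i) :
    ∃ L, 0 < L ∧ 1 ≤ mpow (Smat A G) L i i := by
  obtain ⟨L, hL, h⟩ := exists_mpow_Smat_self_ne_zero G h1 hi
  obtain ⟨K, hK⟩ := exists_one_le_mpow_Smat_mul_mpow G h1 h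
  exact ⟨L, hL, hK.trans (mul_le_of_le_one_right' (mpow_self_le_one h1 K i))⟩

end CriticalSubgraph

section Cyclicity

lemma exists_isGcd_set (S : Set ℕ) :
    ∃ d, (∀ s ∈ S, d ∣ s) ∧ ∀ e : ℕ, (∀ s ∈ S, e ∣ s) → e ∣ d := by
  obtain ⟨g, hg⟩ := Submodule.IsPrincipal.principal (Ideal.span ((Nat.cast : ℕ → ℤ) '' S))
  replace hg : Ideal.span ((Nat.cast : ℕ → ℤ) '' S) = Ideal.span {g} := hg
  refine ⟨g.natAbs, fun s hs => ?_, fun e he => ?_⟩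
  · have hs' : (s : ℤ) ∈ Ideal.span {g} := hg ▸ Ideal.subset_span ⟨s, hs, rfl⟩
    simpa using Int.natAbs_dvd_natAbs.2 (Ideal.mem_span_singleton.1 hs')
  · have hle : Ideal.span ((Nat.cast : ℕ → ℤ) '' S) ≤ Ideal.span {(e : ℤ)} := by
      rw [Ideal.span_le]
      rintro _ ⟨s, hs, rfl⟩
      exact Ideal.mem_span_singleton.2 (Int.natCast_dvd_natCast.2 (he s hs))
    have hg' : g ∈ Ideal.span {(e : ℤ)} := hle (hg ▸ Ideal.mem_span_singleton_self g)
    exact Int.natCast_dvd.1 (Ideal.mem_span_singleton.1 hg')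

lemma setGcd_ne_zero {S : Set ℕ} {s : ℕ} (hs : s ∈ S) (hs0 : s ≠ 0) : setGcd S ≠ 0 := by
  intro h
  have hmem : setGcd S ∈ {d | (∀ s ∈ S, d ∣ s) ∧ ∀ e : ℕ, (∀ s ∈ S, e ∣ s) → e ∣ d} :=
    Nat.sInf_mem (exists_isGcd_set S)
  rw [h] at hmem
  exact hs0 (Nat.eq_zero_of_zero_dvd (hmem.1 s hs))

lemma graphCyc_ne_zero {n : ℕ} (E : Fin n → Fin n → Prop) : graphCyc E ≠ 0 := by
  rw [graphCyc, Ne, Finset.lcm_eq_zero_iff]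
  rintro ⟨i, -, hi⟩
  split_ifs at hi with h
  obtain ⟨k, hk⟩ := h
  exact setGcd_ne_zero hk hk.1.ne' hi

end Cyclicity

section CSR

variable {n : ℕ} {A : Fin n → Fin n → ℝ≥0} (G : CritSubgraph A)

lemma exists_one_le_mpow_Smat_add (h1 : mcgm A = 1) {i : Fin n} (hi : G.Nc i) (t : ℕ) :
    ∃ c d, 0 < d ∧ t + d = graphCyc G.E * c ∧ 1 ≤ mpow (Smat A G) (t + d) i i := by
  obtain ⟨L, hL, hLi⟩ := exists_one_le_mpow_Smat_self G h1 hi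
  have hγ := Nat.pos_of_ne_zero (graphCyc_ne_zero G.E)
  have hlt : t < graphCyc G.E * (L * (t + 1)) :=
    Nat.lt_of_lt_of_le (Nat.lt_succ_self t)
      (Nat.le_mul_of_pos_left _ hγ |>.trans' (Nat.le_mul_of_pos_left _ hL))
  have hT : t + (graphCyc G.E * (L * (t + 1)) - t) = L * ((t + 1) * graphCyc G.E) := by
    rw [Nat.add_sub_cancel' hlt.le]
    ring
  refine ⟨L * (t + 1), graphCyc G.E * (L * (t + 1)) - t, by omega, by omega, ?_⟩
  rw [hT]
  exact one_le_mpow_mul _ hLi _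

lemma mpow_mul_mpow_Smat_mul_mpow_le_row (h1 : mcgm A = 1) {i : Fin n} (hi : G.Nc i)
    (t m q : ℕ) (k l j : Fin n) :
    mpow A (graphCyc G.E * m) i k * mpow (Smat A G) t k l * mpow A (graphCyc G.E * q) l j
      ≤ mmul (mpow (Smat A G) t) (Rmat A G) i j := by
  obtain ⟨c, d, hd, htd, hcyc⟩ := exists_one_le_mpow_Smat_add G h1 hi t
  obtain ⟨l', hl'⟩ := exists_mpow_add_le (Smat A G) t d i i
  have hone := hcyc.trans hl'
  have hNc : G.Nc l' :=
    (G.Nc_of_mpow_Smat_ne_zero hd (right_ne_zero_of_mul (zero_lt_one.trans_le hone).ne')).1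
  have hexp : d + graphCyc G.E * m + t + graphCyc G.E * q = graphCyc G.E * (c + m + q) := by
    rw [mul_add, mul_add, ← htd]
    ring
  calc mpow A (graphCyc G.E * m) i k * mpow (Smat A G) t k l * mpow A (graphCyc G.E * q) l j
      ≤ mpow (Smat A G) t i l' * (mpow (Smat A G) d l' i * (mpow A (graphCyc G.E * m) i k
          * mpow (Smat A G) t k l * mpow A (graphCyc G.E * q) l j)) := by
        rw [← mul_assoc]
        exact le_mul_of_one_le_left' hone
    _ ≤ mpow (Smat A G) t i l' * mpow A (graphCyc G.E * (c + m + q)) l' j := by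
        gcongr
        rw [← hexp, ← mul_assoc, ← mul_assoc]
        refine le_trans ?_ (mpow_mul_mpow_mul_mpow_mul_mpow_le A _ _ _ _ l' i k l j)
        gcongr <;> exact mpow_mono (Smat_le G) _ _ _
    _ ≤ mpow (Smat A G) t i l' * Rmat A G l' j := by
        rw [Rmat, if_pos hNc]
        gcongr
        exact mpow_le_kleeneStar h1 _ _ _ _
    _ ≤ mmul (mpow (Smat A G) t) (Rmat A G) i j := le_mmul _ _ _ _ _

lemma mpow_mul_mpow_Smat_mul_mpow_le_col (h1 : mcgm A = 1) {i : Fin n} (hi : G.Nc i)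
    (t m q : ℕ) (j k l : Fin n) :
    mpow A (graphCyc G.E * m) j k * mpow (Smat A G) t k l * mpow A (graphCyc G.E * q) l i
      ≤ mmul (Cmat A G) (mpow (Smat A G) t) j i := by
  obtain ⟨c, d, hd, htd, hcyc⟩ := exists_one_le_mpow_Smat_add G h1 hi t
  obtain ⟨l', hl'⟩ := exists_mpow_add_le (Smat A G) d t i i
  have hone := hcyc.trans ((add_comm t d).symm ▸ hl')
  have hNc : G.Nc l' :=
    (G.Nc_of_mpow_Smat_ne_zero hd (left_ne_zero_of_mul (zero_lt_one.trans_le hone).ne')).2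
  have hexp : graphCyc G.E * m + t + graphCyc G.E * q + d = graphCyc G.E * (c + m + q) := by
    rw [mul_add, mul_add, ← htd]
    ring
  calc mpow A (graphCyc G.E * m) j k * mpow (Smat A G) t k l * mpow A (graphCyc G.E * q) l i
      ≤ (mpow A (graphCyc G.E * m) j k * mpow (Smat A G) t k l * mpow A (graphCyc G.E * q) l i
          * mpow (Smat A G) d i l') * mpow (Smat A G) t l' i := by
        rw [mul_assoc _ (mpow (Smat A G) d i l')]
        exact le_mul_of_one_le_right' hone
    _ ≤ mpow A (graphCyc G.E * (c + m + q)) j l' * mpow (Smat A G) t l' i := by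
        gcongr
        rw [← hexp]
        refine le_trans ?_ (mpow_mul_mpow_mul_mpow_mul_mpow_le A _ _ _ _ j k l i l')
        gcongr <;> exact mpow_mono (Smat_le G) _ _ _
    _ ≤ Cmat A G j l' * mpow (Smat A G) t l' i := by
        rw [Cmat, if_pos hNc]
        gcongr
        exact mpow_le_kleeneStar h1 _ _ _ _
    _ ≤ mmul (Cmat A G) (mpow (Smat A G) t) j i := le_mmul _ _ _ _ _

lemma Cmat_mul_mul_Rmat_le {x k l y : Fin n} {Y c : ℝ≥0}
    (h : ∀ m q, mpow A (graphCyc G.E * m) x k * Y * mpow A (graphCyc G.E * q) l y ≤ c) :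
    Cmat A G x k * Y * Rmat A G l y ≤ c := by
  unfold Cmat Rmat
  split_ifs
  · rw [kleeneStar_mpow_apply, kleeneStar_mpow_apply]
    refine NNReal.mul_iSup_le fun q => ?_
    rw [mul_assoc]
    refine NNReal.iSup_mul_le fun m => ?_
    rw [← mul_assoc]
    exact h m q
  all_goals simp

lemma csr_apply_le {t : ℕ} {x y : Fin n} {c : ℝ≥0}
    (h : ∀ k l, Cmat A G x k * mpow (Smat A G) t k l * Rmat A G l y ≤ c) : csr A G t x y ≤ c :=
  mmul_le fun l => by
    obtain ⟨k, hk⟩ := exists_mmul_eq (Cmat A G) (mpow (Smat A G) t) x l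
    rw [hk]
    exact h k l

lemma le_csr_apply (t : ℕ) (x k l y : Fin n) :
    Cmat A G x k * mpow (Smat A G) t k l * Rmat A G l y ≤ csr A G t x y :=
  (mul_le_mul_left (le_mmul _ _ _ _ _) _).trans (le_mmul _ _ _ _ _)

lemma one_le_Cmat_self (h1 : mcgm A = 1) {i : Fin n} (hi : G.Nc i) : 1 ≤ Cmat A G i i := by
  rw [Cmat, if_pos hi]
  exact one_le_kleeneStar_self h1 _ _

lemma one_le_Rmat_self (h1 : mcgm A = 1) {i : Fin n} (hi : G.Nc i) : 1 ≤ Rmat A G i i := by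
  rw [Rmat, if_pos hi]
  exact one_le_kleeneStar_self h1 _ _

lemma csr_row_eq (h1 : mcgm A = 1) {i : Fin n} (hi : G.Nc i) (t : ℕ) (j : Fin n) :
    csr A G t i j = mmul (mpow (Smat A G) t) (Rmat A G) i j := by
  refine le_antisymm (csr_apply_le G fun k l => Cmat_mul_mul_Rmat_le G fun m q =>
    mpow_mul_mpow_Smat_mul_mpow_le_row G h1 hi t m q k l j) ?_
  obtain ⟨l, hl⟩ := exists_mmul_eq (mpow (Smat A G) t) (Rmat A G) i j
  rw [hl, ← one_mul (mpow (Smat A G) t i l)]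
  exact le_trans (by gcongr; exact one_le_Cmat_self G h1 hi) (le_csr_apply G t i i l j)

lemma csr_col_eq (h1 : mcgm A = 1) {i : Fin n} (hi : G.Nc i) (t : ℕ) (j : Fin n) :
    csr A G t j i = mmul (Cmat A G) (mpow (Smat A G) t) j i := by
  refine le_antisymm (csr_apply_le G fun k l => Cmat_mul_mul_Rmat_le G fun m q =>
    mpow_mul_mpow_Smat_mul_mpow_le_col G h1 hi t m q j k l) ?_
  obtain ⟨k, hk⟩ := exists_mmul_eq (Cmat A G) (mpow (Smat A G) t) j i
  rw [hk, ← mul_one (Cmat A G j k * mpow (Smat A G) t k i)]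
  exact le_trans (by gcongr; exact one_le_Rmat_self G h1 hi) (le_csr_apply G t j k i i)

end CSR

/-- for a critical node `i ∈ N_c` and any `t ≥ 0`, the `i`-th row
of `P^(t)` equals the `i`-th row of `S^t ⊗ R`, and the `i`-th column of `P^(t)`
equals the `i`-th column of `C ⊗ S^t`. -/
theorem csr_critical_rows_cols {n : ℕ} (A : Fin n → Fin n → ℝ≥0) (h1 : mcgm A = 1)
    (G : CritSubgraph A) (i : Fin n) (hi : G.Nc i) (t : ℕ) :
    (∀ j, csr A G t i j = mmul (mpow (Smat A G) t) (Rmat A G) i j) ∧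
    (∀ j, csr A G t j i = mmul (Cmat A G) (mpow (Smat A G) t) j i) :=
  ⟨csr_row_eq G h1 hi t, csr_col_eq G h1 hi t⟩

end MaxAlg
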